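/- arXiv:2306.03909 — 2 statements merged into one kernel-verified Lean document; each statement's English description precedes it below -/
import Mathlib

section
/- Euler's number e is irrational. -/
/-! If `e = p / q`, then `q! e` is an integer. So is `q! s` for the partial sum
`s = ∑_{m ≤ q} 1 / m!`, while the tail estimate of the exponential series gives
`0 < q! (e - s) ≤ (q + 2) / (q + 1)² < 1`. -/

open Finset Nat Real

theorem Real.sum_inv_factorial_lt_exp_one (n : ℕ) : ∑ m ∈ range n, (m ! : ℝ)⁻¹ < exp 1 := by
  have h := sum_le_exp_of_nonneg zero_le_one (n + 1)
  simp only [one_pow, one_div, sum_range_succ] at h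
  have : (0 : ℝ) < (n ! : ℝ)⁻¹ := by positivity
  linarith

theorem Real.factorial_mul_exp_one_sub_sum_lt_one {n : ℕ} (hn : 0 < n) :
    (n ! : ℝ) * (exp 1 - ∑ m ∈ range (n + 1), (m ! : ℝ)⁻¹) < 1 := by
  have h := exp_bound' zero_le_one le_rfl n.succ_pos
  simp only [one_pow, one_div, one_mul] at h
  have hn' : (1 : ℝ) ≤ n := by exact_mod_cast hn
  calc (n ! : ℝ) * (exp 1 - ∑ m ∈ range (n + 1), (m ! : ℝ)⁻¹)
      ≤ n ! * ((↑(n + 1) + 1) / ((n + 1)! * ↑(n + 1))) := by gcongr; linarith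
    _ = (n + 2) / (n + 1) ^ 2 := by push_cast [factorial_succ]; field_simp; ring
    _ < 1 := by rw [div_lt_one (by positivity)]; nlinarith

theorem Nat.factorial_mul_sum_inv_factorial (n : ℕ) :
    (n ! : ℝ) * ∑ m ∈ range (n + 1), (m ! : ℝ)⁻¹ = ∑ m ∈ range (n + 1), n ! / m ! := by
  rw [mul_sum]
  push_cast
  refine sum_congr rfl fun m hm => ?_
  rw [Nat.cast_div (factorial_dvd_factorial (mem_range_succ_iff.mp hm)) (by positivity),
    div_eq_mul_inv]

theorem Real.factorial_mul_exp_one_ne_intCast {n : ℕ} (hn : 0 < n) (z : ℤ) :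
    (n ! : ℝ) * exp 1 ≠ z := by
  intro hz
  have hsum := factorial_mul_sum_inv_factorial n
  generalize ∑ m ∈ range (n + 1), n ! / (m !) = k at hsum
  have hpos : 0 < (n ! : ℝ) * (exp 1 - ∑ m ∈ range (n + 1), (m ! : ℝ)⁻¹) :=
    mul_pos (by positivity) (sub_pos.mpr (sum_inv_factorial_lt_exp_one _))
  have hlt := factorial_mul_exp_one_sub_sum_lt_one hn
  rw [mul_sub, hz, hsum] at hpos hlt
  have h0 : (k : ℤ) < z := by exact_mod_cast sub_pos.mp hpos
  have h1 : z < k + 1 := by exact_mod_cast sub_lt_iff_lt_add'.mp hlt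
  omega

theorem Rat.exists_intCast_eq_mul_of_den_dvd {q : ℚ} {k : ℕ} (h : q.den ∣ k) :
    ∃ z : ℤ, (k : ℚ) * q = z := by
  obtain ⟨c, rfl⟩ := h
  refine ⟨c * q.num, ?_⟩
  rw [Nat.cast_mul, mul_comm, ← mul_assoc, Rat.mul_den_eq_num]
  push_cast
  ring

theorem e_irrational : Irrational (Real.exp 1) := by
  rintro ⟨q, hq⟩
  obtain ⟨z, hz⟩ := Rat.exists_intCast_eq_mul_of_den_dvd (Nat.dvd_factorial q.pos le_rfl)
  apply Real.factorial_mul_exp_one_ne_intCast q.pos z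
  rw [← hq]
  exact_mod_cast hz
end

section
/- Any two models of second-order Peano arithmetic are isomorphic: if (M, one_M, S_M) and (N, one_N, S_N) each satisfy that S is injective, the distinguished element is not in the range of S, and every subset containing the distinguished element and closed under S is the whole set, then there is a bijection f : M → N with f(one_M) = one_N and f ∘ S_M = S_N ∘ f. -/
lemma peano_iterate_bijective {M : Type*} (oneM : M) (SM : M → M)
    (hM1 : Function.Injective SM) (hM2 : oneM ∉ Set.range SM)
    (hM3 : ∀ P : Set M, oneM ∈ P → (∀ m ∈ P, SM m ∈ P) → P = Set.univ) :
    Function.Bijective (fun n : ℕ => SM^[n] oneM) := by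
  constructor
  · intro a b hab
    simp only at hab
    by_contra hne
    wlog h : a < b generalizing a b
    · exact this hab.symm (Ne.symm hne) (by omega)
    · obtain ⟨k, hk⟩ : ∃ k, b = a + (k + 1) := ⟨b - a - 1, by omega⟩
      subst hk
      rw [Function.iterate_add_apply] at hab
      have := (hM1.iterate a) hab
      rw [Function.iterate_succ_apply'] at this
      exact hM2 ⟨_, this.symm⟩
  · intro m
    have : m ∈ Set.range (fun n : ℕ => SM^[n] oneM) := by
      rw [hM3 (Set.range fun n : ℕ => SM^[n] oneM) ⟨0, rfl⟩ ?_]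
      · trivial
      · rintro x ⟨n, rfl⟩
        exact ⟨n + 1, Function.iterate_succ_apply' SM n oneM⟩
    exact this

theorem peano_models_isomorphic {M N : Type*}
    (oneM : M) (SM : M → M) (oneN : N) (SN : N → N)
    (hM1 : Function.Injective SM) (hM2 : oneM ∉ Set.range SM)
    (hM3 : ∀ P : Set M, oneM ∈ P → (∀ m ∈ P, SM m ∈ P) → P = Set.univ)
    (hN1 : Function.Injective SN) (hN2 : oneN ∉ Set.range SN)
    (hN3 : ∀ P : Set N, oneN ∈ P → (∀ n ∈ P, SN n ∈ P) → P = Set.univ) :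
    ∃ f : M → N, Function.Bijective f ∧ f oneM = oneN ∧
      ∀ m : M, f (SM m) = SN (f m) := by
  have hg := peano_iterate_bijective oneM SM hM1 hM2 hM3
  have hh := peano_iterate_bijective oneN SN hN1 hN2 hN3
  set g := Equiv.ofBijective _ hg with hgdef
  refine ⟨(fun n : ℕ => SN^[n] oneN) ∘ g.symm, hh.comp g.symm.bijective, ?_, ?_⟩
  · have h0 : g.symm oneM = 0 := by
      apply g.injective; simp [hgdef, Equiv.ofBijective_apply]
    simp [h0]
  · intro m
    have hm : SM m = g (g.symm m + 1) := by
      simp only [hgdef, Equiv.ofBijective_apply, Function.iterate_succ_apply']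
      congr 1
      exact (g.apply_symm_apply m).symm
    have : g.symm (SM m) = g.symm m + 1 := by rw [hm, g.symm_apply_apply]
    simp [this, Function.iterate_succ_apply']
end
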